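/- Run OMP(A, b) with termination parameters ε = 0 and k_max = M (the number of columns of A), where b lies in the column space of A. Then the algorithm terminates at some iteration k* ≤ M with residual q_{k*} = 0, and the output c* = argmin_{c : supp(c) ⊆ T_{k*}} ‖b − A c‖_2 satisfies b = A c*. -/

import Mathlib

/-!
The residual `q_k = b - P_{T_k} b` is orthogonal to every selected column. As long as `q_k ≠ 0`,
it is a nonzero vector of the column space (since `b` is), so some column correlates with it;
the greedy choice therefore picks a column outside `T_k`, and `|T_k| = k`. So if `q_M ≠ 0`,
then `T_M` would contain all `M` columns, forcing `q_M = b - P_{span A} b = 0`.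
Once `q_k = 0`, `b` lies in the span of the selected columns, so the least-squares output is exact.
-/

open scoped RealInnerProductSpace Classical

noncomputable section

namespace SSCOMP

variable {D : ℕ}

noncomputable def ompSelect {ι : Type*} [Fintype ι] [LinearOrder ι] [Nonempty ι]
    (a : ι → EuclideanSpace ℝ (Fin D)) (q : EuclideanSpace ℝ (Fin D)) : ι :=
  (Finset.univ.filter fun i => ∀ m, |⟪a m, q⟫| ≤ |⟪a i, q⟫|).min' (by
    obtain ⟨i, -, hi⟩ := Finset.exists_max_image (Finset.univ : Finset ι)
      (fun m => |⟪a m, q⟫|) Finset.univ_nonempty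
    exact ⟨i, Finset.mem_filter.mpr ⟨Finset.mem_univ i, fun m => hi m (Finset.mem_univ m)⟩⟩)

noncomputable def ompState {ι : Type*} [Fintype ι] [LinearOrder ι]
    (a : ι → EuclideanSpace ℝ (Fin D)) (b : EuclideanSpace ℝ (Fin D)) :
    ℕ → Finset ι × EuclideanSpace ℝ (Fin D)
  | 0 => (∅, b)
  | k + 1 =>
    let s := ompState a b k
    if s.2 = 0 then s
    else if h : Nonempty ι then
      haveI := h
      let T' : Finset ι := insert (ompSelect a s.2) s.1
      (T', b - (Submodule.orthogonalProjectionOnto (Submodule.span ℝ (a '' (T' : Set ι))) b :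
        EuclideanSpace ℝ (Fin D)))
    else s

noncomputable def ompSupport {ι : Type*} [Fintype ι] [LinearOrder ι]
    (a : ι → EuclideanSpace ℝ (Fin D)) (b : EuclideanSpace ℝ (Fin D)) (k : ℕ) : Finset ι :=
  (ompState a b k).1

noncomputable def ompResidual {ι : Type*} [Fintype ι] [LinearOrder ι]
    (a : ι → EuclideanSpace ℝ (Fin D)) (b : EuclideanSpace ℝ (Fin D)) (k : ℕ) :
    EuclideanSpace ℝ (Fin D) :=
  (ompState a b k).2

def IsOMPOutput {ι : Type*} [Fintype ι] [LinearOrder ι]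
    (a : ι → EuclideanSpace ℝ (Fin D)) (b : EuclideanSpace ℝ (Fin D)) (kmax : ℕ)
    (c : ι → ℝ) : Prop :=
  (∀ m, c m ≠ 0 → m ∈ ompSupport a b kmax) ∧
  ∀ c' : ι → ℝ, (∀ m, c' m ≠ 0 → m ∈ ompSupport a b kmax) →
    ‖b - ∑ m, c m • a m‖ ≤ ‖b - ∑ m, c' m • a m‖

/-- Set of normalized nonzero residual directions of OMP(a, b) run with `ε = 0`
and `k_max` large enough. -/
noncomputable def residualDirs {ι : Type*} [Fintype ι] [LinearOrder ι]
    (a : ι → EuclideanSpace ℝ (Fin D)) (b : EuclideanSpace ℝ (Fin D)) :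
    Set (EuclideanSpace ℝ (Fin D)) :=
  {w | ∃ k, ompResidual a b k ≠ 0 ∧ w = ‖ompResidual a b k‖⁻¹ • ompResidual a b k}

/-- Coherence between two sets of unit-norm points. -/
noncomputable def coherence (A B : Set (EuclideanSpace ℝ (Fin D))) : ℝ :=
  sSup {r : ℝ | ∃ u ∈ A, ∃ v ∈ B, r = |⟪u, v⟫|}

/-- Symmetrized convex hull `conv(±A)`. -/
noncomputable def symmHull (A : Set (EuclideanSpace ℝ (Fin D))) :
    Set (EuclideanSpace ℝ (Fin D)) :=
  convexHull ℝ (A ∪ (-A))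

/-- Inradius of a convex body: the radius of the largest Euclidean ball
(within the linear span of the body) inscribed in it. -/
noncomputable def inradius (P : Set (EuclideanSpace ℝ (Fin D))) : ℝ :=
  sSup {r : ℝ | 0 ≤ r ∧ ∃ c ∈ Submodule.span ℝ P,
    ∀ y ∈ Submodule.span ℝ P, ‖y - c‖ ≤ r → y ∈ P}

variable {n N : ℕ}

/-- `X^i`: the set of data points lying in the `i`-th subspace. -/
noncomputable def subX (S : Fin n → Submodule ℝ (EuclideanSpace ℝ (Fin D)))
    (x : Fin N → EuclideanSpace ℝ (Fin D)) (i : Fin n) : Set (EuclideanSpace ℝ (Fin D)) :=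
  x '' {m | x m ∈ S i}

/-- `X^i_{-j}`: the set of data points lying in the `i`-th subspace, with `x j` removed. -/
noncomputable def subXmin (S : Fin n → Submodule ℝ (EuclideanSpace ℝ (Fin D)))
    (x : Fin N → EuclideanSpace ℝ (Fin D)) (i : Fin n) (j : Fin N) :
    Set (EuclideanSpace ℝ (Fin D)) :=
  x '' {m | x m ∈ S i ∧ m ≠ j}

/-- `W_j^i`: the set of OMP residual directions associated with `X^i_{-j}` and `x j`. -/
noncomputable def Wji (S : Fin n → Submodule ℝ (EuclideanSpace ℝ (Fin D)))
    (x : Fin N → EuclideanSpace ℝ (Fin D)) (i : Fin n) (j : Fin N) :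
    Set (EuclideanSpace ℝ (Fin D)) :=
  residualDirs (fun m : {m : Fin N // x m ∈ S i ∧ m ≠ j} => x m.1) (x j)

/-- `W^i`: the set of OMP residual directions associated with `X^i`. -/
noncomputable def Wfull (S : Fin n → Submodule ℝ (EuclideanSpace ℝ (Fin D)))
    (x : Fin N → EuclideanSpace ℝ (Fin D)) (i : Fin n) : Set (EuclideanSpace ℝ (Fin D)) :=
  ⋃ j ∈ {j : Fin N | x j ∈ S i}, Wji S x i j

/-- `r_i := min_{j : x_j ∈ S_i} r(P^i_{-j})`. -/
noncomputable def rMin (S : Fin n → Submodule ℝ (EuclideanSpace ℝ (Fin D)))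
    (x : Fin N → EuclideanSpace ℝ (Fin D)) (i : Fin n) : ℝ :=
  sInf {r : ℝ | ∃ j, x j ∈ S i ∧ r = inradius (symmHull (subXmin S x i j))}

/-- Cosine of the principal angle between two subspaces. -/
noncomputable def cosAngle (Si Sk : Submodule ℝ (EuclideanSpace ℝ (Fin D))) : ℝ :=
  sSup {r : ℝ | ∃ u ∈ Si, ∃ v ∈ Sk, ‖u‖ = 1 ∧ ‖v‖ = 1 ∧ r = ⟪u, v⟫}

open Submodule (span)

theorem exists_inner_ne_zero_of_mem_span {𝕜 E ι : Type*} [RCLike 𝕜] [NormedAddCommGroup E]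
    [InnerProductSpace 𝕜 E] {a : ι → E} {x : E} (hx : x ∈ span 𝕜 (Set.range a)) (hx0 : x ≠ 0) :
    ∃ i, inner 𝕜 (a i) x ≠ 0 := by
  by_contra! h
  have hx_orth : x ∈ (𝕜 ∙ x)ᗮ :=
    Submodule.span_le.2 (Set.range_subset_iff.2 fun i =>
      Submodule.mem_orthogonal_singleton_iff_inner_left.2 (h i)) hx
  exact hx0 (inner_self_eq_zero.1 (Submodule.mem_orthogonal_singleton_iff_inner_left.1 hx_orth))

section OMP

variable {ι : Type*} [Fintype ι] [LinearOrder ι]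

theorem abs_inner_le_abs_inner_ompSelect [Nonempty ι] (a : ι → EuclideanSpace ℝ (Fin D))
    (q : EuclideanSpace ℝ (Fin D)) (i : ι) :
    |⟪a i, q⟫| ≤ |⟪a (ompSelect a q), q⟫| := by
  unfold ompSelect
  exact (Finset.mem_filter.1 (Finset.min'_mem
    (Finset.univ.filter fun j => ∀ m, |⟪a m, q⟫| ≤ |⟪a j, q⟫|) _)).2 i

variable {a : ι → EuclideanSpace ℝ (Fin D)} {b : EuclideanSpace ℝ (Fin D)}

theorem ompState_succ_of_ompResidual_eq_zero {k : ℕ} (hq : ompResidual a b k = 0) :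
    ompState a b (k + 1) = ompState a b k := by
  have hq' : (ompState a b k).2 = 0 := hq
  rw [ompState]
  simp [hq']

theorem ompSupport_succ [Nonempty ι] {k : ℕ} (hq : ompResidual a b k ≠ 0) :
    ompSupport a b (k + 1) = insert (ompSelect a (ompResidual a b k)) (ompSupport a b k) := by
  have hq' : (ompState a b k).2 ≠ 0 := hq
  have hι : Nonempty ι := inferInstance
  rw [ompSupport, ompState]
  simp [hq', hι, ompResidual, ompSupport]

theorem ompResidual_eq (k : ℕ) :
    ompResidual a b k = b - (span ℝ (a '' ompSupport a b k)).starProjection b := by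
  induction k with
  | zero => simp [ompResidual, ompSupport, ompState]
  | succ k ih =>
    by_cases hq : ompResidual a b k = 0
    · rwa [ompResidual, ompSupport, ompState_succ_of_ompResidual_eq_zero hq]
    by_cases hι : Nonempty ι
    · have hq' : (ompState a b k).2 ≠ 0 := hq
      rw [ompResidual, ompSupport, ompState]
      simp [hq', hι]
    · rw [ompResidual, ompSupport, ompState]
      simpa [hι, ompResidual, ompSupport] using ih

theorem inner_ompResidual_eq_zero {k : ℕ} {m : ι} (hm : m ∈ ompSupport a b k) :
    ⟪a m, ompResidual a b k⟫ = 0 := by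
  rw [ompResidual_eq]
  exact Submodule.inner_right_of_mem_orthogonal (Submodule.subset_span (Set.mem_image_of_mem a hm))
    (Submodule.sub_starProjection_mem_orthogonal b)

theorem ompResidual_mem_span (hb : b ∈ span ℝ (Set.range a)) (k : ℕ) :
    ompResidual a b k ∈ span ℝ (Set.range a) := by
  have hT : span ℝ (a '' ompSupport a b k) ≤ span ℝ (Set.range a) :=
    Submodule.span_mono (Set.image_subset_range _ _)
  rw [ompResidual_eq]
  exact Submodule.sub_mem _ hb (hT (Submodule.starProjection_apply_mem _ b))

theorem ompSelect_notMem_ompSupport [Nonempty ι] (hb : b ∈ span ℝ (Set.range a)) {k : ℕ}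
    (hq : ompResidual a b k ≠ 0) :
    ompSelect a (ompResidual a b k) ∉ ompSupport a b k := by
  intro hmem
  obtain ⟨i, hi⟩ := exists_inner_ne_zero_of_mem_span (ompResidual_mem_span hb k) hq
  have hsel := abs_inner_le_abs_inner_ompSelect a (ompResidual a b k) i
  rw [inner_ompResidual_eq_zero hmem, abs_zero] at hsel
  exact hi (abs_nonpos_iff.1 hsel)

theorem card_ompSupport (hb : b ∈ span ℝ (Set.range a)) {k : ℕ} (hq : ompResidual a b k ≠ 0) :
    (ompSupport a b k).card = k := by
  induction k with
  | zero => simp [ompSupport, ompState]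
  | succ k ih =>
    have hqk : ompResidual a b k ≠ 0 := fun h0 =>
      hq (by rwa [ompResidual, ompState_succ_of_ompResidual_eq_zero h0])
    obtain ⟨i, -⟩ := exists_inner_ne_zero_of_mem_span (ompResidual_mem_span hb k) hqk
    have : Nonempty ι := ⟨i⟩
    rw [ompSupport_succ hqk, Finset.card_insert_of_notMem (ompSelect_notMem_ompSupport hb hqk),
      ih hqk]

theorem ompResidual_card_eq_zero (hb : b ∈ span ℝ (Set.range a)) :
    ompResidual a b (Fintype.card ι) = 0 := by
  by_contra hq
  have hT : ompSupport a b (Fintype.card ι) = Finset.univ :=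
    Finset.eq_univ_of_card _ (card_ompSupport hb hq)
  apply hq
  rw [ompResidual_eq, hT, Finset.coe_univ, Set.image_univ,
    (Submodule.starProjection_eq_self_iff).2 hb, sub_self]

theorem mem_span_ompSupport_of_ompResidual_eq_zero {k : ℕ} (hq : ompResidual a b k = 0) :
    b ∈ span ℝ (a '' ompSupport a b k) := by
  rw [ompResidual_eq, sub_eq_zero] at hq
  exact Submodule.starProjection_eq_self_iff.1 hq.symm

theorem IsOMPOutput.eq_sum_of_mem_span {k : ℕ} {c : ι → ℝ} (hc : IsOMPOutput a b k c)
    (hb : b ∈ span ℝ (a '' ompSupport a b k)) : b = ∑ m, c m • a m := by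
  obtain ⟨l, hl, hlb⟩ := (Finsupp.mem_span_image_iff_linearCombination ℝ).1 hb
  have hl_sum : ∑ m, l m • a m = b := by
    rw [← hlb, Finsupp.linearCombination_apply, Finsupp.sum_fintype _ _ (by simp)]
  have hle := hc.2 l fun m hm => hl (Finsupp.mem_support_iff.2 hm)
  rw [hl_sum, sub_self, norm_zero] at hle
  exact sub_eq_zero.1 (norm_le_zero_iff.1 hle)

end OMP

/-- Run OMP(A, b) with `ε = 0` and `k_max = M` (the number of columns of
`A`), where `b` lies in the column space of `A`. Then the algorithm terminates at some
iteration `k* ≤ M` with residual `q_{k*} = 0`, and the output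
`c* = argmin_{supp(c) ⊆ T_{k*}} ‖b − A c‖₂` satisfies `b = A c*`. -/
theorem omp_terminates_and_exactRepresentation
    {D : ℕ} {ι : Type*} [Fintype ι] [LinearOrder ι]
    (a : ι → EuclideanSpace ℝ (Fin D)) (b : EuclideanSpace ℝ (Fin D))
    (hspan : b ∈ Submodule.span ℝ (Set.range a)) :
    ∃ kstar ≤ Fintype.card ι, ompResidual a b kstar = 0 ∧
      ∀ c : ι → ℝ, IsOMPOutput a b kstar c → b = ∑ m, c m • a m := by
  have hq := ompResidual_card_eq_zero hspan
  exact ⟨_, le_rfl, hq, fun c hc =>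
    hc.eq_sum_of_mem_span (mem_span_ompSupport_of_ompResidual_eq_zero hq)⟩

end SSCOMP
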